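/- arXiv:1410.0833 — 3 statements merged into one kernel-verified Lean document; each statement's English description precedes it below -/
import Mathlib

section
/- Let G = (V, E) be a directed graph and for i ≥ 1 let G_i = (V, E_i) where E_i consists of all out-edges of vertices with out-degree at most 2^i (vertices with out-degree > 2^i are 'blue', forming set Bl_i). Suppose X ⊆ V induces a bottom SCC of G_i restricted to Z = V \ reach(Bl_{i}, G_i) (vertices that cannot reach a blue vertex in G_i), and X is also disjoint from reach(Bl_{i-1}, G_{i-1}). If X contains no vertex of out-degree (in G) greater than 2^(i-1), then X ⊆ V \ reach(Bl_{i-1}, G_{i-1}). In particular, if X intersects Bl_{i-1}, then |X| ≥ 2^(i-1) (since a bottom SCC containing a vertex of out-degree > 2^(i-1) in G_i must contain all its > 2^(i-1) successors, which lie in X). -/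
/-- The out-degree of `v` in the graph with edges `E`. -/
noncomputable def outdeg {V : Type*} (E : V → V → Prop) (v : V) : ℕ :=
  {w | E v w}.ncard

/-- The subgraph `G_t` keeping only the out-edges of vertices of out-degree at most
`t`. -/
def Esub {V : Type*} (E : V → V → Prop) (t : ℕ) : V → V → Prop :=
  fun u v => E u v ∧ outdeg E u ≤ t

/-- The set of vertices that can reach `S` in the graph with edges `E`. -/
def reachSet {V : Type*} (E : V → V → Prop) (S : Set V) : Set V :=
  {v | ∃ s ∈ S, Relation.ReflTransGen E v s}

/-- The restriction of the edge relation `E` to the vertex set `Z`. -/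
def restrict {V : Type*} (E : V → V → Prop) (Z : Set V) : V → V → Prop :=
  fun u v => u ∈ Z ∧ v ∈ Z ∧ E u v

/-- `x` and `y` are strongly connected (mutually reachable) w.r.t. edges `E`. -/
def SConn {V : Type*} (E : V → V → Prop) (x y : V) : Prop :=
  Relation.ReflTransGen E x y ∧ Relation.ReflTransGen E y x

/-- A maximal strongly connected component. -/
def IsSCCClass {V : Type*} (E : V → V → Prop) (S : Set V) : Prop :=
  ∃ x, S = {y | SConn E x y}

/-- A bottom SCC: a maximal SCC with no edge leaving it. -/
def IsBottomSCC {V : Type*} (E : V → V → Prop) (S : Set V) : Prop :=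
  IsSCCClass E S ∧ ∀ u ∈ S, ∀ v, E u v → v ∈ S

/-- let `Bl_i = {v | outdeg v > 2^i}` (the blue vertices of `G_i`),
`Z = V \ reach(Bl_i, G_i)`, and let `X ⊆ Z` induce a bottom SCC of `G_i` restricted
to `Z`. Then: (a) if `X` contains no vertex of out-degree (in `G`) greater than
`2^(i-1)`, then `X ⊆ V \ reach(Bl_{i-1}, G_{i-1})`; and (b) if `X` intersects
`Bl_{i-1}`, then `|X| ≥ 2^(i-1)`. -/
theorem stmt11 {V : Type*} [Fintype V] (E : V → V → Prop) (i : ℕ) (hi : 1 ≤ i)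
    (Z X : Set V)
    (hZ : Z = {v | v ∉ reachSet (Esub E (2 ^ i)) {u | 2 ^ i < outdeg E u}})
    (hXZ : X ⊆ Z)
    (hX : IsBottomSCC (restrict (Esub E (2 ^ i)) Z) X) :
    ((∀ v ∈ X, outdeg E v ≤ 2 ^ (i - 1)) →
        X ⊆ {v | v ∉ reachSet (Esub E (2 ^ (i - 1))) {u | 2 ^ (i - 1) < outdeg E u}}) ∧
    ((X ∩ {u | 2 ^ (i - 1) < outdeg E u}).Nonempty → 2 ^ (i - 1) ≤ X.ncard) := by
  -- Z is closed under Esub (2^i) edges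
  have hZclosed : ∀ x ∈ Z, ∀ w, Esub E (2 ^ i) x w → w ∈ Z := by
    intro x hx w hxw
    rw [hZ] at hx ⊢
    intro hw
    obtain ⟨s, hs, hpath⟩ := hw
    exact hx ⟨s, hs, Relation.ReflTransGen.head hxw hpath⟩
  -- X is closed under Esub (2^i) edges
  have hXclosed : ∀ x ∈ X, ∀ w, Esub E (2 ^ i) x w → w ∈ X := by
    intro x hx w hxw
    exact hX.2 x hx w ⟨hXZ hx, hZclosed x (hXZ hx) w hxw, hxw⟩
  have hpow : (2 : ℕ) ^ (i - 1) ≤ 2 ^ i := Nat.pow_le_pow_right (by norm_num) (Nat.sub_le i 1)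
  constructor
  · intro hdeg v hv hreach
    obtain ⟨s, hs, hpath⟩ := hreach
    -- the whole path stays in X
    have hsX : s ∈ X := by
      clear hs
      induction hpath with
      | refl => exact hv
      | tail _ hbc ih =>
          exact hXclosed _ ih _ ⟨hbc.1, le_trans hbc.2 hpow⟩
    exact absurd (hdeg s hsX) (not_le.mpr hs)
  · rintro ⟨v, hvX, hvdeg⟩
    -- v ∈ Z, so outdeg v ≤ 2^i
    have hvZ := hXZ hvX
    have hvd : outdeg E v ≤ 2 ^ i := by
      by_contra h
      rw [hZ] at hvZ
      exact hvZ ⟨v, not_le.mp h, Relation.ReflTransGen.refl⟩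
    -- all successors of v are in X
    have hsucc : {w | E v w} ⊆ X := by
      intro w hw
      exact hXclosed v hvX w ⟨hw, hvd⟩
    calc (2:ℕ) ^ (i-1) ≤ outdeg E v := le_of_lt hvdeg
      _ ≤ X.ncard := Set.ncard_le_ncard hsucc (Set.toFinite X)
end

section
/- Lower bound on certificate size: there is a family of strongly connected graphs with n vertices and k Streett pairs (L_j, U_j) with L_j = {s} and U_j = {v_j} for distinct vertices v_1,...,v_k, where the only path between two distinguished vertices s and t has length Θ(n), such that every infinite path satisfying all Streett pairs and visiting s infinitely often has every cycle through s of length at least n/2, and hence any lasso-shaped certificate (a finite path followed by a repeated cycle covering one vertex from each U_j with L_j intersected) has size at least Ω(n · k). -/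
/-- The edge relation of the certificate lower-bound family: a simple directed path
`s = p_0 → p_1 → ... → p_L = t` (the vertices `Sum.inl i`), an edge from `t` to each
`v_j` (the vertices `Sum.inr j`), and an edge from each `v_j` back to `s`. -/
def pathE (L k : ℕ) : (Fin (L + 1) ⊕ Fin k) → (Fin (L + 1) ⊕ Fin k) → Prop :=
  fun a b =>
    match a, b with
    | .inl i, .inl j => (j : ℕ) = (i : ℕ) + 1
    | .inl i, .inr _ => (i : ℕ) = L
    | .inr _, .inl j => (j : ℕ) = 0
    | .inr _, .inr _ => False

/-! Since `t` is the only in-neighbour of each `v_j` and every other path vertex has only its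
path predecessor as in-neighbour, each visit to `v_j` at time `b` is preceded by the whole
path `s → ⋯ → t` at times `b - 1 - L, …, b - 1`. The time `b - 1 - m` determines both `m`
(from the vertex visited) and `b`, hence `j`, so these give `k (L + 1)` distinct times
below `len`. -/

section Walk

variable {L k : ℕ}

lemma pathE_inr_iff {a : Fin (L + 1) ⊕ Fin k} {j : Fin k} :
    pathE L k a (.inr j) ↔ a = .inl (Fin.last L) := by
  cases a <;> simp [pathE, Fin.ext_iff]

lemma pathE_inl_iff {a : Fin (L + 1) ⊕ Fin k} {i : Fin (L + 1)} (hi : (i : ℕ) ≠ 0) :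
    pathE L k a (.inl i) ↔ a = .inl ⟨i - 1, by omega⟩ := by
  cases a <;> simp only [pathE, Sum.inl.injEq, Fin.ext_iff, reduceCtorEq, iff_false] <;> omega

lemma walk_eq_inl_sub {len : ℕ} {f : ℕ → Fin (L + 1) ⊕ Fin k}
    (hwalk : ∀ i < len, pathE L k (f i) (f (i + 1))) (h0 : f 0 = .inl 0)
    {b : ℕ} (hb : b ≤ len) {i : Fin (L + 1)} (hfb : f b = .inl i) :
    ∀ m ≤ (i : ℕ), m ≤ b ∧ f (b - m) = .inl ⟨i - m, by omega⟩
  | 0, _ => ⟨Nat.zero_le b, by simpa using hfb⟩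
  | m + 1, hm => by
    obtain ⟨hmb, hfm⟩ := walk_eq_inl_sub hwalk h0 hb hfb m (by omega)
    have hpos : (i : ℕ) - m ≠ 0 := by omega
    have hbm : b - m ≠ 0 := by
      rintro hbm
      rw [hbm, h0, Sum.inl.injEq, Fin.ext_iff, Fin.val_zero] at hfm
      exact hpos hfm.symm
    have hstep := hwalk (b - (m + 1)) (by omega)
    rw [show b - (m + 1) + 1 = b - m by omega, hfm, pathE_inl_iff hpos] at hstep
    exact ⟨by omega, by simpa [Nat.sub_sub] using hstep⟩

lemma walk_eq_inr {len : ℕ} {f : ℕ → Fin (L + 1) ⊕ Fin k}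
    (hwalk : ∀ i < len, pathE L k (f i) (f (i + 1))) (h0 : f 0 = .inl 0)
    (hend : f len = .inl 0) {b : ℕ} (hb : b ≤ len) {j : Fin k} (hfb : f b = .inr j) :
    b < len ∧ ∀ m ≤ L, m + 1 ≤ b ∧ f (b - 1 - m) = .inl ⟨L - m, by omega⟩ := by
  have hb0 : b ≠ 0 := by rintro rfl; simp [h0] at hfb
  have hblen : b ≠ len := by rintro rfl; simp [hend] at hfb
  have hstep := hwalk (b - 1) (by omega)
  rw [Nat.sub_add_cancel (Nat.one_le_iff_ne_zero.mpr hb0), hfb, pathE_inr_iff] at hstep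
  refine ⟨by omega, fun m hm => ?_⟩
  obtain ⟨hmb, hfm⟩ := walk_eq_inl_sub hwalk h0 (by omega) hstep m hm
  exact ⟨by omega, hfm⟩

end Walk

theorem stmt16_general (L k len : ℕ)
    (f : ℕ → Fin (L + 1) ⊕ Fin k)
    (hwalk : ∀ i < len, pathE L k (f i) (f (i + 1)))
    (h0 : f 0 = Sum.inl 0) (hend : f len = Sum.inl 0)
    (hall : ∀ j : Fin k, ∃ i ≤ len, f i = Sum.inr j) :
    k * L ≤ len := by
  choose t ht hft using hall
  have hvisit j := walk_eq_inr hwalk h0 hend (ht j) (hft j)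
  let g : Fin k × Fin (L + 1) → ℕ := fun p => t p.1 - 1 - p.2
  have hmaps : Set.MapsTo g ↑(Finset.univ : Finset (Fin k × Fin (L + 1)))
      ↑(Finset.range len) := fun p _ => by
    have := (hvisit p.1).1
    simp only [Finset.coe_range, Set.mem_Iio, g]
    omega
  have hinj : Set.InjOn g ↑(Finset.univ : Finset (Fin k × Fin (L + 1))) := by
    rintro ⟨j, m⟩ - ⟨j', m'⟩ - hg
    obtain ⟨hmj, hfj⟩ := (hvisit j).2 m (by omega)
    obtain ⟨hmj', hfj'⟩ := (hvisit j').2 m' (by omega)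
    have hm : m = m' := by
      have := hfj.symm.trans ((congrArg f hg).trans hfj')
      simp only [Sum.inl.injEq, Fin.ext_iff] at this
      omega
    subst hm
    have ht : t j = t j' := by simp only [g] at hg; omega
    exact Prod.ext (Sum.inr_injective ((hft j).symm.trans (ht ▸ hft j'))) rfl
  calc k * L ≤ k * (L + 1) := Nat.mul_le_mul_left k (Nat.le_succ L)
    _ = (Finset.univ : Finset (Fin k × Fin (L + 1))).card := by simp
    _ ≤ len := by simpa using Finset.card_le_card_of_injOn g hmaps hinj

/-- lower bound on certificate size, formalizable version: in the graph
above (with Streett pairs `L_j = {s}`, `U_j = {v_j}`), any closed walk starting and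
ending at `s` that visits all of `v_1, …, v_k` has length at least `k · L`
(where `L = Θ(n)` is the length of the only `s`–`t` path). Hence any lasso-shaped
certificate has size `Ω(n · k)`. -/
theorem stmt16 (L k len : ℕ) (hL : 1 ≤ L)
    (f : ℕ → Fin (L + 1) ⊕ Fin k)
    (hwalk : ∀ i < len, pathE L k (f i) (f (i + 1)))
    (h0 : f 0 = Sum.inl 0) (hend : f len = Sum.inl 0)
    (hall : ∀ j : Fin k, ∃ i ≤ len, f i = Sum.inr j) :
    k * L ≤ len :=
  stmt16_general L k len f hwalk h0 hend hall
end

section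
/- Correctness of bad-vertex removal: let S ⊆ V and suppose X ⊆ S induces a non-trivial strongly connected subgraph such that for every j, L_j ∩ X = ∅ or U_j ∩ X ≠ ∅ (a good component). Then X contains no bad vertex of S, where a vertex v ∈ S is bad if there exists j with v ∈ L_j and U_j ∩ SCC_S(v) = ∅, where SCC_S(v) is the SCC of v in G[S]. Hence removing bad vertices from S preserves all good components contained in G[S]. -/
theorem restrict_mono {V : Type*} (E : V → V → Prop) {Z Z' : Set V} (h : Z ⊆ Z') :
    restrict E Z ≤ restrict E Z' :=
  fun _ _ ⟨hu, hv, he⟩ => ⟨h hu, h hv, he⟩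

theorem sConn_restrict_of_forall_reflTransGen {V : Type*} (E : V → V → Prop) {X S : Set V}
    (hXS : X ⊆ S) (hconn : ∀ x ∈ X, ∀ y ∈ X, Relation.ReflTransGen (restrict E X) x y)
    {u v : V} (hu : u ∈ X) (hv : v ∈ X) : SConn (restrict E S) u v :=
  ⟨Relation.ReflTransGen.mono (restrict_mono E hXS) _ _ (hconn u hu v hv),
    Relation.ReflTransGen.mono (restrict_mono E hXS) _ _ (hconn v hv u hu)⟩

theorem stmt17_general {V : Type*} (E : V → V → Prop) (k : ℕ)
    (L U : Fin k → Set V) (S X : Set V) (hXS : X ⊆ S)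
    (hconn : ∀ x ∈ X, ∀ y ∈ X, Relation.ReflTransGen (restrict E X) x y)
    (hgood : ∀ j, L j ∩ X = ∅ ∨ (U j ∩ X).Nonempty) :
    ∀ v ∈ X, ¬ ∃ j, v ∈ L j ∧ ∀ u ∈ U j, ¬ SConn (restrict E S) v u := by
  rintro v hv ⟨j, hvL, hbad⟩
  rcases hgood j with hempty | ⟨u, huU, huX⟩
  · exact Set.eq_empty_iff_forall_notMem.mp hempty v ⟨hvL, hv⟩
  · exact hbad u huU (sConn_restrict_of_forall_reflTransGen E hXS hconn hv huX)

/-- if `X ⊆ S` induces a non-trivial strongly connected subgraph that is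
a good component (for every Streett pair `j`, `L j ∩ X = ∅` or `U j ∩ X ≠ ∅`), then no
vertex of `X` is bad w.r.t. `S`, where `v ∈ S` is bad if for some `j`, `v ∈ L j` and no
vertex of `U j` is strongly connected to `v` within `G[S]`. Hence removing bad vertices
from `S` preserves all good components contained in `G[S]`. -/
theorem stmt17 {V : Type*} [Fintype V] (E : V → V → Prop) (k : ℕ)
    (L U : Fin k → Set V) (S X : Set V) (hXS : X ⊆ S)
    (hconn : ∀ x ∈ X, ∀ y ∈ X, Relation.ReflTransGen (restrict E X) x y)
    (hnontriv : ∃ x ∈ X, ∃ y ∈ X, E x y)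
    (hgood : ∀ j, L j ∩ X = ∅ ∨ (U j ∩ X).Nonempty) :
    ∀ v ∈ X, ¬ ∃ j, v ∈ L j ∧ ∀ u ∈ U j, ¬ SConn (restrict E S) v u :=
  stmt17_general E k L U S X hXS hconn hgood
end
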